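/- Slater implies strong duality / KKT necessity for linear constraints: if the feasible set {x : Gx = c, Hx ≥ h} of a differentiable convex program contains a point x̃ with Gx̃ = c and Hx̃ > h (componentwise strict), and x* is a minimizer, then there exist multipliers μ and λ ≥ 0 with ∇f(x*) = Gᵀμ + Hᵀλ and λᵀ(Hx* − h) = 0. -/

import Mathlib

open Matrix Finset

lemma farkas_fin {n : ℕ} : ∀ (m : ℕ) (a : Fin m → (Fin n → ℝ)) (g : Fin n → ℝ),
    (¬ ∃ lam : Fin m → ℝ, (∀ i, 0 ≤ lam i) ∧ g = ∑ i, lam i • a i) →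
    ∃ d : Fin n → ℝ, (∀ i, 0 ≤ a i ⬝ᵥ d) ∧ g ⬝ᵥ d < 0 := by
  intro m
  induction m with
  | zero =>
    intro a g hg
    have hgne : g ≠ 0 := by
      rintro rfl
      exact hg ⟨fun i => i.elim0, fun i => i.elim0, by simp⟩
    refine ⟨-g, fun i => i.elim0, ?_⟩
    have hne : g ⬝ᵥ g ≠ 0 := fun hz => hgne (dotProduct_self_eq_zero.mp hz)
    have : 0 < g ⬝ᵥ g :=
      (Finset.sum_nonneg fun i _ => mul_self_nonneg _).lt_of_ne (Ne.symm hne)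
    simpa [dotProduct_neg] using neg_neg_iff_pos.2 this
  | succ m ih =>
    intro a g hg
    set a0 : Fin m → (Fin n → ℝ) := fun i => a i.castSucc with ha0
    set b : Fin n → ℝ := a (Fin.last m) with hb
    have hg0 : ¬ ∃ lam : Fin m → ℝ, (∀ i, 0 ≤ lam i) ∧ g = ∑ i, lam i • a0 i := by
      rintro ⟨lam, hlam, hsum⟩
      refine hg ⟨Fin.snoc lam 0, ?_, ?_⟩
      · intro i
        induction i using Fin.lastCases with
        | last => simp
        | cast i => simpa using hlam i
      · rw [Fin.sum_univ_castSucc]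
        simpa using hsum
    obtain ⟨d, hd, hgd⟩ := ih a0 g hg0
    by_cases hbd : 0 ≤ b ⬝ᵥ d
    · refine ⟨d, ?_, hgd⟩
      intro i
      induction i using Fin.lastCases with
      | last => exact hbd
      | cast i => exact hd i
    · push_neg at hbd
      have hβ : b ⬝ᵥ d ≠ 0 := ne_of_lt hbd
      set a' : Fin m → (Fin n → ℝ) := fun i => a0 i - ((a0 i ⬝ᵥ d) / (b ⬝ᵥ d)) • b with ha'
      set g' : Fin n → ℝ := g - ((g ⬝ᵥ d) / (b ⬝ᵥ d)) • b with hg'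
      have hg'0 : ¬ ∃ lam : Fin m → ℝ, (∀ i, 0 ≤ lam i) ∧ g' = ∑ i, lam i • a' i := by
        rintro ⟨lam, hlam, hsum⟩
        set μ : ℝ := (g ⬝ᵥ d - ∑ i, lam i * (a0 i ⬝ᵥ d)) / (b ⬝ᵥ d) with hμ
        have hμpos : 0 ≤ μ := by
          apply le_of_lt
          apply div_pos_of_neg_of_neg _ hbd
          have : 0 ≤ ∑ i, lam i * (a0 i ⬝ᵥ d) :=
            Finset.sum_nonneg fun i _ => mul_nonneg (hlam i) (hd i)
          linarith
        refine hg ⟨Fin.snoc lam μ, ?_, ?_⟩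
        · intro i
          induction i using Fin.lastCases with
          | last => simpa using hμpos
          | cast i => simpa using hlam i
        · rw [Fin.sum_univ_castSucc]
          simp only [Fin.snoc_castSucc, Fin.snoc_last, ← ha0, ← hb]
          have hexp : ∑ i, lam i • a' i
              = (∑ i, lam i • a0 i) - ((∑ i, lam i * (a0 i ⬝ᵥ d)) / (b ⬝ᵥ d)) • b := by
            have h1 : ∀ i : Fin m, lam i • a' i
                = lam i • a0 i - (lam i * (a0 i ⬝ᵥ d) / (b ⬝ᵥ d)) • b := by
              intro i
              rw [ha']
              rw [smul_sub, smul_smul]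
              ring_nf
            rw [Finset.sum_congr rfl (fun i _ => h1 i), Finset.sum_sub_distrib,
              ← Finset.sum_smul, ← Finset.sum_div]
          have h2 : g = ((∑ i, lam i • a0 i)
              - ((∑ i, lam i * (a0 i ⬝ᵥ d)) / (b ⬝ᵥ d)) • b) + ((g ⬝ᵥ d) / (b ⬝ᵥ d)) • b := by
            apply eq_add_of_sub_eq
            rw [← hexp, ← hsum, hg']
          have h3 : g = (∑ i, lam i • a0 i) + μ • b := by
            rw [h2, hμ, sub_div, sub_smul]
            abel
          simpa using h3
      obtain ⟨e, he, hge⟩ := ih a' g' hg'0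
      refine ⟨e - ((b ⬝ᵥ e) / (b ⬝ᵥ d)) • d, ?_, ?_⟩
      · intro i
        induction i using Fin.lastCases with
        | last =>
          have hzero : b ⬝ᵥ (e - ((b ⬝ᵥ e) / (b ⬝ᵥ d)) • d) = 0 := by
            simp only [dotProduct_sub, dotProduct_smul, smul_eq_mul]
            field_simp
            ring
          show (0:ℝ) ≤ b ⬝ᵥ (e - ((b ⬝ᵥ e) / (b ⬝ᵥ d)) • d)
          rw [hzero]
        | cast i =>
          have := he i
          rw [ha'] at this
          have heq : a0 i ⬝ᵥ (e - ((b ⬝ᵥ e) / (b ⬝ᵥ d)) • d)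
              = (a0 i - ((a0 i ⬝ᵥ d) / (b ⬝ᵥ d)) • b) ⬝ᵥ e := by
            simp only [dotProduct_sub, sub_dotProduct, dotProduct_smul, smul_dotProduct,
              smul_eq_mul]
            ring
          show (0:ℝ) ≤ a0 i ⬝ᵥ (e - ((b ⬝ᵥ e) / (b ⬝ᵥ d)) • d)
          rw [heq]
          exact this
      · have heq : g ⬝ᵥ (e - ((b ⬝ᵥ e) / (b ⬝ᵥ d)) • d) = g' ⬝ᵥ e := by
          rw [hg']
          simp only [dotProduct_sub, sub_dotProduct, dotProduct_smul, smul_dotProduct,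
            smul_eq_mul]
          ring
        rw [heq]; exact hge

lemma farkas_general {n : ℕ} {ι : Type*} [Fintype ι] (a : ι → Fin n → ℝ) (g : Fin n → ℝ)
    (hyp : ∀ d : Fin n → ℝ, (∀ i, 0 ≤ a i ⬝ᵥ d) → 0 ≤ g ⬝ᵥ d) :
    ∃ lam : ι → ℝ, (∀ i, 0 ≤ lam i) ∧ g = ∑ i, lam i • a i := by
  classical
  let e := Fintype.equivFin ι
  by_contra hc
  have hc' : ¬ ∃ lam : Fin (Fintype.card ι) → ℝ,
      (∀ i, 0 ≤ lam i) ∧ g = ∑ i, lam i • (a ∘ e.symm) i := by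
    rintro ⟨lam, hlam, hsum⟩
    refine hc ⟨lam ∘ e, fun i => hlam (e i), ?_⟩
    rw [hsum]
    exact Fintype.sum_equiv e.symm _ _ (fun j => by simp)
  obtain ⟨d, hd, hgd⟩ := farkas_fin _ (a ∘ e.symm) g hc'
  exact absurd (hyp d fun i => by simpa using hd (e i)) (not_le.2 hgd)

theorem stmt_12 {n p q : ℕ} (f : (Fin n → ℝ) → ℝ)
    (hconv : ConvexOn ℝ Set.univ f) (hdiff : Differentiable ℝ f)
    (G : Matrix (Fin p) (Fin n) ℝ) (c : Fin p → ℝ)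
    (H : Matrix (Fin q) (Fin n) ℝ) (h : Fin q → ℝ)
    (xt : Fin n → ℝ) (hslater : G.mulVec xt = c ∧ ∀ i, h i < H.mulVec xt i)
    (xs : Fin n → ℝ) (hxs_eq : G.mulVec xs = c) (hxs_ineq : ∀ i, h i ≤ H.mulVec xs i)
    (hmin : ∀ x : Fin n → ℝ, G.mulVec x = c → (∀ i, h i ≤ H.mulVec x i) → f xs ≤ f x) :
    ∃ (μ : Fin p → ℝ) (lam : Fin q → ℝ),
      (∀ i, 0 ≤ lam i) ∧
      (∀ v : Fin n → ℝ,
        fderiv ℝ f xs v = (G.transpose.mulVec μ + H.transpose.mulVec lam) ⬝ᵥ v) ∧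
      lam ⬝ᵥ (H.mulVec xs - h) = 0 := by
  classical
  set L := fderiv ℝ f xs with hL
  -- gradient vector
  set g : Fin n → ℝ := fun j => L (fun k => if j = k then 1 else 0) with hgdef
  have hLg : ∀ v : Fin n → ℝ, L v = g ⬝ᵥ v := by
    intro v
    rw [show L v = (L : (Fin n → ℝ) →ₗ[ℝ] ℝ) v from rfl,
      LinearMap.pi_apply_eq_sum_univ]
    rw [dotProduct]
    exact Finset.sum_congr rfl fun j _ => by rw [smul_eq_mul, mul_comm]; rfl
  -- variational inequality
  have key : ∀ d : Fin n → ℝ, G.mulVec d = 0 →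
      (∀ i, H.mulVec xs i = h i → 0 ≤ H.mulVec d i) → 0 ≤ g ⬝ᵥ d := by
    intro d hGd hHd
    rw [← hLg]
    have hφ : HasDerivAt (fun t : ℝ => f (xs + t • d)) (L d) 0 := by
      have h1 : HasDerivAt (fun t : ℝ => xs + t • d) d 0 := by
        simpa using ((hasDerivAt_id (0 : ℝ)).smul_const d).const_add xs
      have h2 := (hdiff (xs + (0:ℝ) • d)).hasFDerivAt.comp_hasDerivAt 0 h1
      rw [zero_smul, add_zero] at h2
      exact h2
    have hfeas : ∀ᶠ t in nhdsWithin (0:ℝ) (Set.Ioi 0), f xs ≤ f (xs + t • d) := by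
      have hineq : ∀ᶠ t in nhdsWithin (0:ℝ) (Set.Ioi 0),
          ∀ i, h i ≤ H.mulVec (xs + t • d) i := by
        rw [Filter.eventually_all]
        intro i
        by_cases hi : H.mulVec xs i = h i
        · filter_upwards [self_mem_nhdsWithin] with t ht
          have ht' : (0:ℝ) ≤ t := le_of_lt ht
          have := hHd i hi
          rw [Matrix.mulVec_add, Matrix.mulVec_smul]
          simp only [Pi.add_apply, Pi.smul_apply, smul_eq_mul]
          nlinarith
        · have hlt : h i < H.mulVec xs i := (hxs_ineq i).lt_of_ne (Ne.symm hi)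
          have hcont : Filter.Tendsto (fun t : ℝ => H.mulVec (xs + t • d) i)
              (nhdsWithin (0:ℝ) (Set.Ioi 0)) (nhds (H.mulVec xs i)) := by
            apply Filter.Tendsto.mono_left _ nhdsWithin_le_nhds
            have hfun : (fun t : ℝ => H.mulVec (xs + t • d) i)
                = fun t : ℝ => H.mulVec xs i + t * H.mulVec d i := by
              funext t
              rw [Matrix.mulVec_add, Matrix.mulVec_smul]
              simp
            rw [hfun]
            have : Continuous fun t : ℝ => H.mulVec xs i + t * H.mulVec d i :=
              continuous_const.add (continuous_id.mul continuous_const)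
            simpa using this.tendsto 0
          filter_upwards [hcont.eventually (lt_mem_nhds hlt)] with t ht
          exact le_of_lt ht
      filter_upwards [hineq] with t hti
      apply hmin
      · rw [Matrix.mulVec_add, Matrix.mulVec_smul, hGd, hxs_eq]
        simp
      · exact hti
    have hslope := hasDerivAt_iff_tendsto_slope.mp hφ
    have hslope' : Filter.Tendsto (slope (fun t : ℝ => f (xs + t • d)) 0)
        (nhdsWithin (0:ℝ) (Set.Ioi 0)) (nhds (L d)) :=
      hslope.mono_left (nhdsWithin_mono 0 fun x hx => ne_of_gt hx)
    refine ge_of_tendsto hslope' ?_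
    filter_upwards [hfeas, self_mem_nhdsWithin] with t hf ht
    rw [slope_def_field]
    simp only [zero_smul, add_zero, sub_zero]
    exact div_nonneg (sub_nonneg.2 hf) (le_of_lt ht)
  -- assemble vectors for Farkas
  set a : (Fin p ⊕ (Fin p ⊕ Fin q)) → (Fin n → ℝ) :=
    Sum.elim (fun i => G i)
      (Sum.elim (fun i => -(G i)) (fun i => if H.mulVec xs i = h i then H i else 0))
    with hadef
  have hyp : ∀ d : Fin n → ℝ, (∀ i, 0 ≤ a i ⬝ᵥ d) → 0 ≤ g ⬝ᵥ d := by
    intro d hd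
    apply key
    · funext i
      have h1 := hd (Sum.inl i)
      have h2 := hd (Sum.inr (Sum.inl i))
      simp only [hadef, Sum.elim_inl, Sum.elim_inr, neg_dotProduct] at h1 h2
      have : G i ⬝ᵥ d = 0 := le_antisymm (by linarith) h1
      simpa [Matrix.mulVec, dotProduct] using this
    · intro i hi
      have h3 := hd (Sum.inr (Sum.inr i))
      simp only [hadef, Sum.elim_inr, hi, if_pos] at h3
      simpa [Matrix.mulVec, dotProduct] using h3
  obtain ⟨lam0, hlam0, hgsum⟩ := farkas_general a g hyp
  refine ⟨fun i => lam0 (Sum.inl i) - lam0 (Sum.inr (Sum.inl i)),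
    fun i => if H.mulVec xs i = h i then lam0 (Sum.inr (Sum.inr i)) else 0, ?_, ?_, ?_⟩
  · intro i
    by_cases hi : H.mulVec xs i = h i
    · simp only [hi, if_pos]
      exact hlam0 _
    · simp [hi]
  · intro v
    rw [show fderiv ℝ f xs v = L v from rfl, hLg]
    congr 1
    have hsumG : ∀ (w : Fin p → ℝ), G.transpose.mulVec w = ∑ i, w i • G i := by
      intro w
      funext j
      simp [Matrix.mulVec, dotProduct, Matrix.transpose_apply, Finset.sum_apply, mul_comm]
    have hsumH : ∀ (w : Fin q → ℝ), H.transpose.mulVec w = ∑ i, w i • H i := by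
      intro w
      funext j
      simp [Matrix.mulVec, dotProduct, Matrix.transpose_apply, Finset.sum_apply, mul_comm]
    rw [hgsum, hsumG, hsumH, Fintype.sum_sum_type, Fintype.sum_sum_type]
    simp only [hadef, Sum.elim_inl, Sum.elim_inr]
    have e1 : ∑ i : Fin p, (lam0 (Sum.inl i) - lam0 (Sum.inr (Sum.inl i))) • G i
        = (∑ i : Fin p, lam0 (Sum.inl i) • G i)
          - ∑ i : Fin p, lam0 (Sum.inr (Sum.inl i)) • G i := by
      rw [← Finset.sum_sub_distrib]
      exact Finset.sum_congr rfl fun i _ => sub_smul _ _ _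
    have e2 : ∑ i : Fin q,
        (if H.mulVec xs i = h i then lam0 (Sum.inr (Sum.inr i)) else 0) • H i
        = ∑ i : Fin q, lam0 (Sum.inr (Sum.inr i))
            • (if H.mulVec xs i = h i then H i else 0) := by
      refine Finset.sum_congr rfl fun i _ => ?_
      by_cases hi : H.mulVec xs i = h i <;> simp [hi]
    rw [e1, e2]
    have e3 : ∑ i : Fin p, lam0 (Sum.inr (Sum.inl i)) • -(G i)
        = -∑ i : Fin p, lam0 (Sum.inr (Sum.inl i)) • G i := by
      rw [← Finset.sum_neg_distrib]
      exact Finset.sum_congr rfl fun i _ => smul_neg _ _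
    rw [e3]
    abel
  · apply Finset.sum_eq_zero
    intro i _
    by_cases hi : H.mulVec xs i = h i
    · simp [hi]
    · simp [hi]
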